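/- arXiv:1510.04146 — 4 statements merged into one kernel-verified Lean document; each statement's English description precedes it below -/
import Mathlib

section
/- If g : [0,∞)^n → [0,∞)^m maps bounded sets to bounded sets and is lower semicontinuous (coordinatewise), and f : [0,∞)^m → [−∞,∞) is decreasing (with respect to the coordinatewise partial order) and upper semicontinuous, then the composition f ∘ g is upper semicontinuous. -/
open scoped NNReal

/-- If `g : [0,∞)ⁿ → [0,∞)ᵐ` maps bounded sets to bounded sets and is coordinatewise
lower semicontinuous, and `f : [0,∞)ᵐ → [−∞,∞)` is decreasing (coordinatewise order)
and upper semicontinuous, then `f ∘ g` is upper semicontinuous. -/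
theorem usc_comp_of_antitone {n m : ℕ}
    (g : (Fin n → ℝ≥0) → (Fin m → ℝ≥0)) (f : (Fin m → ℝ≥0) → EReal)
    (hg_bdd : ∀ s : Set (Fin n → ℝ≥0), Bornology.IsBounded s → Bornology.IsBounded (g '' s))
    (hg_lsc : ∀ i, LowerSemicontinuous (fun x => g x i))
    (hf_anti : Antitone f) (hf_usc : UpperSemicontinuous f)
    (hf_fin : ∀ x, f x < ⊤) :
    UpperSemicontinuous (f ∘ g) := by
  intro x₀ c hc
  set z₀ := g x₀ with hz₀
  have hz : {z | f z < c} ∈ nhds z₀ := hf_usc z₀ c hc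
  obtain ⟨ε, hε, hball⟩ := Metric.mem_nhds_iff.mp hz
  have key : ∀ i : Fin m, ∀ᶠ x in nhds x₀, dist (min (g x i) (z₀ i)) (z₀ i) < ε := by
    intro i
    by_cases h0 : z₀ i = 0
    · filter_upwards with x
      simp [h0, hε]
    · have hpos : (0 : ℝ) < (z₀ i : ℝ) := by exact_mod_cast zero_lt_iff.mpr h0
      set y : ℝ≥0 := Real.toNNReal ((z₀ i : ℝ) - ε / 2) with hy
      have hycoe : (y : ℝ) = max ((z₀ i : ℝ) - ε / 2) 0 := Real.coe_toNNReal' _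
      have hylt : y < z₀ i := by
        rw [← NNReal.coe_lt_coe, hycoe]
        exact max_lt (by linarith) hpos
      filter_upwards [hg_lsc i x₀ y hylt] with x hx
      have hmin : y ≤ min (g x i) (z₀ i) := le_min hx.le hylt.le
      have hmin' : (y : ℝ) ≤ ((min (g x i) (z₀ i) : ℝ≥0) : ℝ) := NNReal.coe_le_coe.2 hmin
      have h1 : ((min (g x i) (z₀ i) : ℝ≥0) : ℝ) ≤ (z₀ i : ℝ) := by
        exact_mod_cast min_le_right (g x i) (z₀ i)
      have hy' : (z₀ i : ℝ) - ε / 2 ≤ (y : ℝ) := by rw [hycoe]; exact le_max_left _ _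
      rw [NNReal.dist_eq, abs_sub_comm, abs_of_nonneg (by linarith)]
      linarith
  filter_upwards [Filter.eventually_all.2 key] with x hx
  have hu : f (fun i => min (g x i) (z₀ i)) < c :=
    hball (Metric.mem_ball.2 ((dist_pi_lt_iff hε).2 hx))
  exact lt_of_le_of_lt (hf_anti (fun i => min_le_left _ _)) hu
end

section
/- If g : [0,∞)^n → [0,∞)^m maps bounded sets to bounded sets and is upper semicontinuous (coordinatewise), and f : [0,∞)^m → [−∞,∞) is increasing (coordinatewise) and upper semicontinuous, then f ∘ g is upper semicontinuous. -/
open scoped NNReal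

/-- If `g : [0,∞)ⁿ → [0,∞)ᵐ` maps bounded sets to bounded sets and is coordinatewise
upper semicontinuous, and `f : [0,∞)ᵐ → [−∞,∞)` is increasing (coordinatewise order)
and upper semicontinuous, then `f ∘ g` is upper semicontinuous. -/
theorem usc_comp_of_monotone {n m : ℕ}
    (g : (Fin n → ℝ≥0) → (Fin m → ℝ≥0)) (f : (Fin m → ℝ≥0) → EReal)
    (hg_bdd : ∀ s : Set (Fin n → ℝ≥0), Bornology.IsBounded s → Bornology.IsBounded (g '' s))
    (hg_usc : ∀ i, UpperSemicontinuous (fun x => g x i))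
    (hf_mono : Monotone f) (hf_usc : UpperSemicontinuous f)
    (hf_fin : ∀ x, f x < ⊤) :
    UpperSemicontinuous (f ∘ g) := by
  intro x c hc
  -- `hc : f (g x) < c`
  have cont : Continuous (fun ε : ℝ≥0 => (g x + fun _ => ε)) := by
    apply continuous_pi
    intro i
    exact continuous_const.add continuous_id
  have h0 : (fun ε : ℝ≥0 => (g x + fun _ => ε)) 0 = g x := by
    funext i; simp
  have htend : Filter.Tendsto (fun ε : ℝ≥0 => (g x + fun _ => ε)) (nhds 0) (nhds (g x)) := by
    have h := cont.tendsto 0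
    rwa [show (g x + fun _ => (0:ℝ≥0)) = g x from h0] at h
  have h1 : ∀ᶠ ε in nhds (0 : ℝ≥0), f (g x + fun _ => ε) < c :=
    htend.eventually (hf_usc (g x) c hc)
  have h2 : ∀ᶠ ε in nhdsWithin (0 : ℝ≥0) (Set.Ioi 0),
      f (g x + fun _ => ε) < c ∧ ε ∈ Set.Ioi (0 : ℝ≥0) :=
    ((h1.filter_mono nhdsWithin_le_nhds).and self_mem_nhdsWithin)
  obtain ⟨ε, hfε, hεpos⟩ := h2.exists
  have h3 : ∀ᶠ y in nhds x, ∀ i, g y i < g x i + ε := by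
    rw [Filter.eventually_all]
    intro i
    exact hg_usc i x (g x i + ε) (lt_add_of_pos_right _ hεpos)
  filter_upwards [h3] with y hy
  have hle : g y ≤ g x + fun _ => ε := fun i => (hy i).le
  calc f (g y) ≤ f (g x + fun _ => ε) := hf_mono hle
    _ < c := hfε
end

section
/- If g : [0,∞)^n → [0,∞)^m maps bounded sets to bounded sets and is lower semicontinuous (coordinatewise), and f : [0,∞)^m → [−∞,∞) is increasing (coordinatewise) and lower semicontinuous, then f ∘ g is lower semicontinuous. -/
open scoped NNReal

/-- If `g : [0,∞)ⁿ → [0,∞)ᵐ` maps bounded sets to bounded sets and is coordinatewise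
lower semicontinuous, and `f : [0,∞)ᵐ → [−∞,∞)` is increasing (coordinatewise order)
and lower semicontinuous, then `f ∘ g` is lower semicontinuous. -/
theorem lsc_comp_of_monotone {n m : ℕ}
    (g : (Fin n → ℝ≥0) → (Fin m → ℝ≥0)) (f : (Fin m → ℝ≥0) → EReal)
    (hg_bdd : ∀ s : Set (Fin n → ℝ≥0), Bornology.IsBounded s → Bornology.IsBounded (g '' s))
    (hg_lsc : ∀ i, LowerSemicontinuous (fun x => g x i))
    (hf_mono : Monotone f) (hf_lsc : LowerSemicontinuous f)
    (hf_fin : ∀ x, f x < ⊤) :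
    LowerSemicontinuous (f ∘ g) := by
  intro x₀ c hc
  have hh : Filter.Tendsto (fun x => fun i => min (g x i) (g x₀ i)) (nhds x₀)
      (nhds (g x₀)) := by
    rw [tendsto_pi_nhds]
    intro i
    rw [tendsto_order]
    constructor
    · intro t ht
      filter_upwards [hg_lsc i x₀ t ht] with x hx
      exact lt_min hx ht
    · intro d hd
      filter_upwards with x
      exact lt_of_le_of_lt (min_le_right _ _) hd
  filter_upwards [hh.eventually (hf_lsc (g x₀) c hc)] with x hx
  exact lt_of_lt_of_le hx (hf_mono fun i => min_le_left _ _)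
end

section
/- Let W ⊂ ℝ^d be compact, ℓ : [0,∞) → (0,∞) Lipschitz with constant J₂ and ℓ ≥ ℓ_min > 0 on distances in W. Fix a Lipschitz trajectory y and a finite measure ν̄ on the trajectory space with ν̄(L) > 0. Then the map x ↦ (SIR(x_t, y_t, ν̄_t))_{t} from the space of J₁-Lipschitz trajectories (with supremum norm) to bounded functions on [0,T) (with supremum norm) is Lipschitz continuous with constant J₂/(ℓ_min·ν̄(L)), uniformly in y. -/
open MeasureTheory
open scoped NNReal

/-!
At each time the SIR denominator `∫ ℓ(|ζ - η|) ν̄_t(dζ)` is at least `ℓ_min ν̄(L)`, or it is the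
junk value `0` of a non-integrable integrand, in which case both quotients vanish. The numerators
differ by at most `J₂ |x_t - x'_t|`, since `ξ ↦ ℓ(|ξ - η|)` is `J₂`-Lipschitz, and `|x_t - x'_t|`
is bounded by the supremum because Lipschitz trajectories are bounded on `[0, T)`.
-/

theorem LipschitzWith.dist_le_iSup_dist {α β : Type*} [PseudoMetricSpace α]
    [PseudoMetricSpace β] {Kf Kg : ℝ≥0} {f g : α → β} (hf : LipschitzWith Kf f)
    (hg : LipschitzWith Kg g) {s : Set α} (hs : Bornology.IsBounded s) {t : α} (ht : t ∈ s) :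
    dist (f t) (g t) ≤ ⨆ u : s, dist (f u) (g u) := by
  have hlip : LipschitzWith (2 * max Kf Kg) fun u => dist (f u) (g u) :=
    LipschitzWith.dist.comp (hf.prodMk hg)
  have hbdd : BddAbove (Set.range fun u : s => dist (f u) (g u)) := by
    rw [← Set.image_eq_range (fun u => dist (f u) (g u)) s]
    exact (hlip.isBounded_image hs).bddAbove
  exact le_ciSup hbdd ⟨t, ht⟩

theorem MeasureTheory.integral_eq_zero_or_mul_measureReal_univ_le {α : Type*}
    [MeasurableSpace α] {μ : Measure α} [IsFiniteMeasure μ] {f : α → ℝ} {c : ℝ}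
    (hf : ∀ z, c ≤ f z) : ∫ z, f z ∂μ = 0 ∨ c * μ.real Set.univ ≤ ∫ z, f z ∂μ := by
  by_cases hint : Integrable f μ
  · right
    simpa [mul_comm] using integral_mono (integrable_const c) hint hf
  · exact Or.inl (integral_undef hint)

theorem abs_div_sub_div_le_of_eq_zero_or_le {a b c D : ℝ} (hc : 0 < c) (hD : D = 0 ∨ c ≤ D) :
    |a / D - b / D| ≤ |a - b| / c := by
  rcases hD with rfl | hcD
  · simpa using div_nonneg (abs_nonneg (a - b)) hc.le
  · rw [div_sub_div_same, abs_div, abs_of_pos (hc.trans_le hcD)]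
    exact div_le_div_of_nonneg_left (abs_nonneg _) hc hcD

theorem sir_trajectory_lipschitz_general {d : ℕ} (W : Set (EuclideanSpace ℝ (Fin d))) (T : ℝ)
    (J₁ J₂ : ℝ≥0) (ℓ : ℝ → ℝ) (hℓ : LipschitzWith J₂ ℓ)
    (ℓmin : ℝ) (hℓmin : 0 < ℓmin)
    (hbd : ∀ ξ ∈ W, ∀ η ∈ W, ℓmin ≤ ℓ (dist ξ η))
    (L : Type*) [MeasurableSpace L] (ev : L → ℝ → EuclideanSpace ℝ (Fin d))
    (hev_W : ∀ z, ∀ t ∈ Set.Ico (0 : ℝ) T, ev z t ∈ W)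
    (ν : Measure L) [IsFiniteMeasure ν] (hν : 0 < ν Set.univ)
    (y : ℝ → EuclideanSpace ℝ (Fin d))
    (hyW : ∀ t ∈ Set.Ico (0 : ℝ) T, y t ∈ W) :
    ∀ x x' : ℝ → EuclideanSpace ℝ (Fin d),
      LipschitzWith J₁ x → LipschitzWith J₁ x' →
      (∀ t ∈ Set.Ico (0 : ℝ) T, x t ∈ W) → (∀ t ∈ Set.Ico (0 : ℝ) T, x' t ∈ W) →
      ∀ t ∈ Set.Ico (0 : ℝ) T,
        |ℓ (dist (x t) (y t)) / ∫ z, ℓ (dist (ev z t) (y t)) ∂ν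
          - ℓ (dist (x' t) (y t)) / ∫ z, ℓ (dist (ev z t) (y t)) ∂ν|
        ≤ ((J₂ : ℝ) / (ℓmin * (ν Set.univ).toReal))
            * ⨆ s : Set.Ico (0 : ℝ) T, dist (x s) (x' s) := by
  intro x x' hx hx' _ _ t ht
  have hmass : 0 < ℓmin * (ν Set.univ).toReal :=
    mul_pos hℓmin (ENNReal.toReal_pos hν.ne' (measure_ne_top ν _))
  have hden := integral_eq_zero_or_mul_measureReal_univ_le (μ := ν)
    fun z => hbd _ (hev_W z t ht) _ (hyW t ht)
  have hnum : |ℓ (dist (x t) (y t)) - ℓ (dist (x' t) (y t))|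
      ≤ J₂ * ⨆ s : Set.Ico (0 : ℝ) T, dist (x s) (x' s) := by
    have hSIR : LipschitzWith (J₂ * 1) fun ξ => ℓ (dist ξ (y t)) :=
      hℓ.comp (LipschitzWith.dist_left (y t))
    calc |ℓ (dist (x t) (y t)) - ℓ (dist (x' t) (y t))| ≤ J₂ * dist (x t) (x' t) := by
          simpa [Real.dist_eq] using hSIR.dist_le_mul (x t) (x' t)
      _ ≤ J₂ * ⨆ s : Set.Ico (0 : ℝ) T, dist (x s) (x' s) := by
          gcongr
          exact hx.dist_le_iSup_dist hx' (Metric.isBounded_Ico _ _) ht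
  calc _ ≤ |ℓ (dist (x t) (y t)) - ℓ (dist (x' t) (y t))| / (ℓmin * (ν Set.univ).toReal) :=
        abs_div_sub_div_le_of_eq_zero_or_le hmass hden
    _ ≤ _ := by
        rw [div_mul_eq_mul_div]
        gcongr

/-- Lipschitz continuity of `x ↦ (SIR(x_t, y_t, ν̄_t))_t` in the trajectory `x`, with respect
to the supremum norms, with constant `J₂/(ℓ_min · ν̄(L))`, uniformly in `y`. -/
theorem sir_trajectory_lipschitz {d : ℕ} (W : Set (EuclideanSpace ℝ (Fin d))) (T : ℝ)
    (hT : 0 < T) (J₁ J₂ : ℝ≥0) (ℓ : ℝ → ℝ) (hℓ : LipschitzWith J₂ ℓ)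
    (ℓmin : ℝ) (hℓmin : 0 < ℓmin)
    (hbd : ∀ ξ ∈ W, ∀ η ∈ W, ℓmin ≤ ℓ (dist ξ η))
    (L : Type*) [MeasurableSpace L] (ev : L → ℝ → EuclideanSpace ℝ (Fin d))
    (hev_lip : ∀ z, LipschitzWith J₁ (ev z))
    (hev_W : ∀ z, ∀ t ∈ Set.Ico (0 : ℝ) T, ev z t ∈ W)
    (hev_meas : ∀ t, Measurable fun z => ev z t)
    (ν : Measure L) [IsFiniteMeasure ν] (hν : 0 < ν Set.univ)
    (y : ℝ → EuclideanSpace ℝ (Fin d)) (hy : LipschitzWith J₁ y)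
    (hyW : ∀ t ∈ Set.Ico (0 : ℝ) T, y t ∈ W) :
    ∀ x x' : ℝ → EuclideanSpace ℝ (Fin d),
      LipschitzWith J₁ x → LipschitzWith J₁ x' →
      (∀ t ∈ Set.Ico (0 : ℝ) T, x t ∈ W) → (∀ t ∈ Set.Ico (0 : ℝ) T, x' t ∈ W) →
      ∀ t ∈ Set.Ico (0 : ℝ) T,
        |ℓ (dist (x t) (y t)) / ∫ z, ℓ (dist (ev z t) (y t)) ∂ν
          - ℓ (dist (x' t) (y t)) / ∫ z, ℓ (dist (ev z t) (y t)) ∂ν|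
        ≤ ((J₂ : ℝ) / (ℓmin * (ν Set.univ).toReal))
            * ⨆ s : Set.Ico (0 : ℝ) T, dist (x s) (x' s) :=
  sir_trajectory_lipschitz_general W T J₁ J₂ ℓ hℓ ℓmin hℓmin hbd L ev hev_W ν hν y hyW
end
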